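/- Let H be a Hopf algebra with bijective antipode and A a right H-comodule algebra with B = A^{co H}. If for every generator h of H (as an algebra) the element 1 ⊗ h lies in the image of the canonical map χ: A ⊗_B A → A ⊗ H, then χ is surjective. -/

import Mathlib

open TensorProduct

variable (k H A : Type*) [Field k] [Ring H] [HopfAlgebra k H] [Ring A] [Algebra k A]

/-- The canonical map (at the level of `A ⊗[k] A`, of which the canonical map
`χ : A ⊗_B A → A ⊗ H` is the induced quotient map): `a' ⊗ a ↦ a' a_(0) ⊗ a_(1)`. -/
noncomputable def chi0 (δ : A →ₐ[k] A ⊗[k] H) : A ⊗[k] A →ₗ[k] A ⊗[k] H :=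
  (LinearMap.mul' k (A ⊗[k] H)) ∘ₗ
    (TensorProduct.map (Algebra.TensorProduct.includeLeft : A →ₐ[k] A ⊗[k] H).toLinearMap
      δ.toLinearMap)

/-!
The range of `χ` is stable under left multiplication by `A ⊗ 1` and right multiplication by
`δ(A)`. Since `1 ⊗ h` commutes with `A ⊗ 1`, it follows that `(1 ⊗ h) χ(u) ∈ range χ`
whenever `1 ⊗ h ∈ range χ`; hence the `h` with `1 ⊗ h ∈ range χ` form a subalgebra of `H`,
which is all of `H` because it contains the generators. Finally `a ⊗ h = (a ⊗ 1)(1 ⊗ h)`.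
-/

section

variable {k H A} (δ : A →ₐ[k] A ⊗[k] H)

lemma chi0_tmul (a b : A) : chi0 k H A δ (a ⊗ₜ b) = (a ⊗ₜ (1 : H)) * δ b := by
  simp [chi0]

lemma chi0_map_mulLeft (a : A) (u : A ⊗[k] A) :
    chi0 k H A δ (TensorProduct.map (LinearMap.mulLeft k a) LinearMap.id u) =
      (a ⊗ₜ (1 : H)) * chi0 k H A δ u := by
  induction u using TensorProduct.induction_on with
  | zero => simp
  | tmul b c => simp [chi0_tmul, ← mul_assoc, Algebra.TensorProduct.tmul_mul_tmul]
  | add x y hx hy => simp only [map_add, hx, hy, mul_add]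

lemma chi0_map_mulRight (a : A) (u : A ⊗[k] A) :
    chi0 k H A δ (TensorProduct.map LinearMap.id (LinearMap.mulRight k a) u) =
      chi0 k H A δ u * δ a := by
  induction u using TensorProduct.induction_on with
  | zero => simp
  | tmul b c => simp [chi0_tmul, mul_assoc]
  | add x y hx hy => simp only [map_add, hx, hy, add_mul]

lemma one_tmul_mul_mem_range_chi0 {h : H} (hh : 1 ⊗ₜ h ∈ LinearMap.range (chi0 k H A δ))
    {y : A ⊗[k] H} (hy : y ∈ LinearMap.range (chi0 k H A δ)) :
    (1 ⊗ₜ h) * y ∈ LinearMap.range (chi0 k H A δ) := by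
  obtain ⟨v, hv⟩ := hh
  obtain ⟨u, rfl⟩ := hy
  induction u using TensorProduct.induction_on with
  | zero => simp
  | add x y hx hy => simpa only [map_add, mul_add] using add_mem hx hy
  | tmul a b =>
    have hcomm : ((1 : A) ⊗ₜ[k] h) * (a ⊗ₜ (1 : H)) = (a ⊗ₜ (1 : H)) * (1 ⊗ₜ h) := by
      simp
    refine ⟨TensorProduct.map (LinearMap.mulLeft k a) LinearMap.id
      (TensorProduct.map LinearMap.id (LinearMap.mulRight k b) v), ?_⟩
    show _ = (1 ⊗ₜ h) * chi0 k H A δ (a ⊗ₜ b)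
    rw [chi0_map_mulLeft, chi0_map_mulRight, hv, chi0_tmul, ← mul_assoc, ← mul_assoc, hcomm]

noncomputable def oneTmulMemRangeChi0 : Subalgebra k H where
  carrier := {h | 1 ⊗ₜ h ∈ LinearMap.range (chi0 k H A δ)}
  mul_mem' {x y} hx hy := by
    simpa using one_tmul_mul_mem_range_chi0 δ hx hy
  add_mem' {x y} hx hy := by
    simpa only [Set.mem_ofPred_eq, tmul_add] using add_mem hx hy
  algebraMap_mem' r := ⟨r • (1 ⊗ₜ 1), by
    simp [chi0_tmul, Algebra.algebraMap_eq_smul_one, tmul_smul]⟩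

end

theorem canonical_map_surjective_of_generators
    (δ : A →ₐ[k] A ⊗[k] H)
    (S : Set H) (hgen : Algebra.adjoin k S = ⊤)
    (hhit : ∀ h ∈ S, ∃ u : A ⊗[k] A, chi0 k H A δ u = 1 ⊗ₜ[k] h) :
    Function.Surjective (chi0 k H A δ) := by
  have hone_tmul (h : H) : 1 ⊗ₜ h ∈ LinearMap.range (chi0 k H A δ) := by
    have hle : Algebra.adjoin k S ≤ oneTmulMemRangeChi0 δ := Algebra.adjoin_le hhit
    exact hle (hgen ▸ Algebra.mem_top)
  rw [← LinearMap.range_eq_top, eq_top_iff, ← TensorProduct.span_tmul_eq_top,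
    Submodule.span_le]
  rintro _ ⟨a, h, rfl⟩
  obtain ⟨u, hu⟩ := hone_tmul h
  refine ⟨TensorProduct.map (LinearMap.mulLeft k a) LinearMap.id u, ?_⟩
  simp [chi0_map_mulLeft, hu]
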